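/- For every constant β with 0 < β ≤ 1, the redundancy of S^β satisfies R_S^β(x_{1:n}) ≥ CL_w(𝒜) + Σ_{j∈𝒜} (1/2)·ln n_j − (1/2)·ln n − m − (1 − ln√(2π) + (1/2)·ln 2). -/

import Mathlib

open Finset Real Filter

variable {𝒳 : Type*} [Fintype 𝒳] [DecidableEq 𝒳]

/-- `n_i^t`: number of occurrences of symbol `i` among the first `t` symbols
`x 0, …, x (t-1)` (the paper's `x_1, …, x_t`). -/
def cnt (x : ℕ → 𝒳) (i : 𝒳) (t : ℕ) : ℕ :=
  ((Finset.range t).filter fun τ => x τ = i).card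

/-- `𝒜_t`: the set of symbols occurring among the first `t` symbols. -/
def alph (x : ℕ → 𝒳) (t : ℕ) : Finset 𝒳 := (Finset.range t).image x

/-- Predictive probability `S^{β⃗}(x_{t+1} = i | x_{1:t})`. -/
noncomputable def Spred (x : ℕ → 𝒳) (w : ℕ → 𝒳 → ℝ) (β : ℕ → ℝ) (t : ℕ) (i : 𝒳) : ℝ :=
  if 0 < cnt x i t then (cnt x i t : ℝ) / (t + β t) else β t * w t i / (t + β t)

/-- Joint probability `S^{β⃗}(x_{1:n})`. -/
noncomputable def Sjoint (x : ℕ → 𝒳) (w : ℕ → 𝒳 → ℝ) (β : ℕ → ℝ) (n : ℕ) : ℝ :=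
  ∏ t ∈ Finset.range n, Spred x w β t (x t)

/-- `𝒩`: the set of times `t ∈ {0,…,n-1}` at which a new symbol occurs. -/
def newTimes (x : ℕ → 𝒳) (n : ℕ) : Finset ℕ :=
  (Finset.range n).filter fun t => x t ∉ alph x t

/-- `CL_w(𝒜)`: code length of the used alphabet. -/
noncomputable def CLw (x : ℕ → 𝒳) (w : ℕ → 𝒳 → ℝ) (n : ℕ) : ℝ :=
  ∑ t ∈ newTimes x n, Real.log (1 / w t (x t))

/-- Redundancy `R_S^{β⃗}(x_{1:n}) = ln(n^{-n} ∏_{j∈𝒜} n_j^{n_j}) - ln S^{β⃗}(x_{1:n})`. -/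
noncomputable def Red (x : ℕ → 𝒳) (w : ℕ → 𝒳 → ℝ) (β : ℕ → ℝ) (n : ℕ) : ℝ :=
  Real.log (((n : ℝ) ^ n)⁻¹ * ∏ j ∈ alph x n, (cnt x j n : ℝ) ^ cnt x j n)
    - Real.log (Sjoint x w β n)

lemma mem_alph_iff (x : ℕ → 𝒳) (i : 𝒳) (t : ℕ) : i ∈ alph x t ↔ 0 < cnt x i t := by
  simp [alph, cnt, Finset.card_pos, Finset.filter_nonempty_iff]

lemma cnt_succ (x : ℕ → 𝒳) (i : 𝒳) (t : ℕ) :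
    cnt x i (t + 1) = cnt x i t + if x t = i then 1 else 0 := by
  unfold cnt
  rw [Finset.range_add_one, Finset.filter_insert]
  split_ifs with h
  · rw [Finset.card_insert_of_notMem (fun hm => absurd (Finset.mem_of_mem_filter t hm)
      (by simp))]
  · simp

lemma alph_succ (x : ℕ → 𝒳) (t : ℕ) : alph x (t + 1) = insert (x t) (alph x t) := by
  simp [alph, Finset.range_add_one, Finset.image_insert]

lemma sum_cnt (x : ℕ → 𝒳) (n : ℕ) : ∑ j : 𝒳, cnt x j n = n := by
  have h := Finset.card_eq_sum_card_fiberwise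
    (s := Finset.range n) (t := Finset.univ) (f := x) (fun t _ => Finset.mem_univ (x t))
  simpa [cnt, Finset.card_range] using h.symm

lemma card_newTimes (x : ℕ → 𝒳) (n : ℕ) : (newTimes x n).card = (alph x n).card := by
  induction n with
  | zero => simp [newTimes, alph]
  | succ n ih =>
    have hnt : newTimes x (n + 1)
        = if x n ∉ alph x n then insert n (newTimes x n) else newTimes x n := by
      unfold newTimes
      rw [Finset.range_add_one, Finset.filter_insert]
    have hnn : n ∉ newTimes x n := by simp [newTimes]
    by_cases h : x n ∈ alph x n
    · rw [hnt, if_neg (not_not_intro h), ih, alph_succ, Finset.insert_eq_self.mpr h]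
    · rw [hnt, if_pos h, Finset.card_insert_of_notMem hnn, ih, alph_succ,
        Finset.card_insert_of_notMem h]

lemma sum_log_cnt (x : ℕ → 𝒳) (n : ℕ) :
    ∑ t ∈ Finset.range n, Real.log (cnt x (x t) t)
      = ∑ j : 𝒳, ∑ k ∈ Finset.range (cnt x j n), Real.log k := by
  induction n with
  | zero => simp [cnt]
  | succ n ih =>
    rw [Finset.sum_range_succ, ih]
    have key : ∀ j : 𝒳, ∑ k ∈ Finset.range (cnt x j (n + 1)), Real.log k
        = (∑ k ∈ Finset.range (cnt x j n), Real.log k)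
          + (if x n = j then Real.log (cnt x j n) else 0) := by
      intro j
      rw [cnt_succ]
      split_ifs with h
      · rw [Finset.sum_range_succ]
      · simp
    simp only [key, Finset.sum_add_distrib, Finset.sum_ite_eq, Finset.mem_univ, if_true]

lemma sum_range_log (m : ℕ) :
    ∑ k ∈ Finset.range (m + 1), Real.log k = Real.log (Nat.factorial m) := by
  induction m with
  | zero => simp
  | succ m ih =>
    rw [Finset.sum_range_succ, ih, Nat.factorial_succ]
    push_cast
    rw [Real.log_mul (by positivity) (by exact_mod_cast Nat.factorial_ne_zero m)]
    ring

lemma log_factorial_eq (k : ℕ) (hk : 1 ≤ k) :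
    Real.log (Nat.factorial k) = Real.log (Stirling.stirlingSeq k) + (1/2) * Real.log 2
      + (1/2) * Real.log k + k * Real.log k - k := by
  have hk0 : (0:ℝ) < k := by exact_mod_cast hk
  have h := Stirling.log_stirlingSeq_formula k
  rw [Real.log_mul two_ne_zero (ne_of_gt hk0),
    Real.log_div (ne_of_gt hk0) (Real.exp_ne_zero 1), Real.log_exp] at h
  linear_combination -h

lemma stirling_le (k : ℕ) (hk : 1 ≤ k) :
    Real.log (Stirling.stirlingSeq k) ≤ 1 - (1/2) * Real.log 2 := by
  obtain ⟨m, rfl⟩ := (⟨k - 1, by omega⟩ : ∃ m, k = m + 1)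
  have h1 : Stirling.stirlingSeq (m + 1) ≤ Stirling.stirlingSeq 1 :=
    Stirling.stirlingSeq'_antitone (Nat.zero_le m)
  have h2 := Real.log_le_log (Stirling.stirlingSeq'_pos m) h1
  rw [Stirling.stirlingSeq_one, Real.log_div (by positivity) (by positivity),
    Real.log_exp, Real.log_sqrt (by norm_num)] at h2
  linarith

lemma stirling_ge (k : ℕ) (hk : 1 ≤ k) :
    (1/2) * Real.log π ≤ Real.log (Stirling.stirlingSeq k) := by
  obtain ⟨m, rfl⟩ := (⟨k - 1, by omega⟩ : ∃ m, k = m + 1)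
  have h1 : Real.sqrt π ≤ Stirling.stirlingSeq (m + 1) :=
    Stirling.stirlingSeq'_antitone.le_of_tendsto
      ((Filter.tendsto_add_atTop_iff_nat 1).mpr Stirling.tendsto_stirlingSeq_sqrt_pi) m
  have h2 := Real.log_le_log (Real.sqrt_pos.mpr Real.pi_pos) h1
  rw [Real.log_sqrt Real.pi_pos.le] at h2
  linarith

lemma log_factorial_le (k : ℕ) (hk : 1 ≤ k) :
    Real.log (Nat.factorial k) ≤ k * Real.log k - k + (1/2) * Real.log k + 1 := by
  have h1 := log_factorial_eq k hk
  have h2 := stirling_le k hk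
  linarith

lemma log_factorial_ge (k : ℕ) (hk : 1 ≤ k) :
    k * Real.log k - k + (1/2) * Real.log k + (1/2) * Real.log 2 + (1/2) * Real.log π
      ≤ Real.log (Nat.factorial k) := by
  have h1 := log_factorial_eq k hk
  have h2 := stirling_ge k hk
  linarith

lemma log_fac_split (m : ℕ) :
    Real.log (Nat.factorial (m+1)) = Real.log (m + 1) + Real.log (Nat.factorial m) := by
  rw [Nat.factorial_succ]
  push_cast
  rw [Real.log_mul (by positivity) (by exact_mod_cast Nat.factorial_ne_zero m)]

lemma per_symbol (c : ℕ) (hc : 1 ≤ c) :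
    (c:ℝ) - 1 + (1/2) * Real.log c
      ≤ (c:ℝ) * Real.log c - ∑ k ∈ Finset.range c, Real.log k := by
  obtain ⟨m, rfl⟩ := (⟨c - 1, by omega⟩ : ∃ m, c = m + 1)
  rw [sum_range_log m]
  have h1 := log_factorial_le (m + 1) (by omega)
  have h2 := log_fac_split m
  push_cast at h1 h2 ⊢
  linarith

lemma lower_tail (n : ℕ) (hn : 1 ≤ n) :
    (n:ℝ) * Real.log n - n - (1/2) * Real.log n + (1/2) * Real.log 2 + (1/2) * Real.log π
      ≤ ∑ k ∈ Finset.range n, Real.log k := by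
  obtain ⟨m, rfl⟩ := (⟨n - 1, by omega⟩ : ∃ m, n = m + 1)
  rw [sum_range_log m]
  have h1 := log_factorial_ge (m + 1) (by omega)
  have h2 := log_fac_split m
  push_cast at h1 h2 ⊢
  linarith

/-- Eq. (27): lower bound on `R_S^β` for `0 < β ≤ 1`. -/
theorem red_lower_bound_beta_le_one
    (n : ℕ) (hn : 1 ≤ n) (x : ℕ → 𝒳) (w : ℕ → 𝒳 → ℝ)
    (hw : ∀ t i, 0 < w t i)
    (hwsum : ∀ t, ∑ k ∈ Finset.univ \ alph x t, w t k ≤ 1)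
    (β : ℝ) (hβ0 : 0 < β) (hβ1 : β ≤ 1) :
    Red x w (fun _ => β) n ≥
      CLw x w n + ∑ j ∈ alph x n, (1/2) * Real.log (cnt x j n)
      - (1/2) * Real.log n - (alph x n).card
      - (1 - Real.log (Real.sqrt (2 * π)) + (1/2) * Real.log 2) := by
  have hβ' : ∀ t : ℕ, (0:ℝ) < t + β := fun t => by positivity
  have hSpos : ∀ t, 0 < Spred x w (fun _ => β) t (x t) := by
    intro t
    unfold Spred
    split_ifs with h
    · exact div_pos (by exact_mod_cast h) (hβ' t)
    · exact div_pos (mul_pos hβ0 (hw t (x t))) (hβ' t)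
  have hlog_t : ∀ t, Real.log (Spred x w (fun _ => β) t (x t))
      = Real.log (cnt x (x t) t)
        + (if x t ∉ alph x t then Real.log β + Real.log (w t (x t)) else 0)
        - Real.log ((t:ℝ) + β) := by
    intro t
    by_cases hmem : x t ∈ alph x t
    · have h : 0 < cnt x (x t) t := (mem_alph_iff x (x t) t).mp hmem
      unfold Spred
      rw [if_pos h, if_neg (not_not_intro hmem),
        Real.log_div (by exact_mod_cast h.ne') (hβ' t).ne']
      ring
    · have h : cnt x (x t) t = 0 := by
        by_contra hc
        exact hmem ((mem_alph_iff x (x t) t).mpr (Nat.pos_of_ne_zero hc))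
      unfold Spred
      rw [if_neg (by omega), if_pos hmem,
        Real.log_div (mul_pos hβ0 (hw t (x t))).ne' (hβ' t).ne',
        Real.log_mul hβ0.ne' (hw t (x t)).ne', h]
      simp only [Nat.cast_zero, Real.log_zero]
      ring
  have hcntpos : ∀ j ∈ alph x n, 0 < cnt x j n := fun j hj => (mem_alph_iff x j n).mp hj
  have hn0 : (0:ℝ) < n := by exact_mod_cast hn
  -- restrict fiber sums to the alphabet
  have hrestrict : ∑ j : 𝒳, ∑ k ∈ Finset.range (cnt x j n), Real.log k
      = ∑ j ∈ alph x n, ∑ k ∈ Finset.range (cnt x j n), Real.log k := by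
    symm
    apply Finset.sum_subset (Finset.subset_univ _)
    intro j _ hj
    have h0 : cnt x j n = 0 := by
      by_contra hc
      exact hj ((mem_alph_iff x j n).mpr (Nat.pos_of_ne_zero hc))
    simp [h0]
  have hsumA : ∑ j ∈ alph x n, (cnt x j n : ℝ) = n := by
    have h2 : ∑ j ∈ alph x n, cnt x j n = ∑ j : 𝒳, cnt x j n := by
      symm
      apply (Finset.sum_subset (Finset.subset_univ _) _).symm
      intro j _ hj
      by_contra hc
      exact hj ((mem_alph_iff x j n).mpr (Nat.pos_of_ne_zero hc))
    have h3 : ∑ j ∈ alph x n, cnt x j n = n := by rw [h2, sum_cnt]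
    exact_mod_cast h3
  -- log of the joint probability
  have hlogS : Real.log (Sjoint x w (fun _ => β) n)
      = (∑ j ∈ alph x n, ∑ k ∈ Finset.range (cnt x j n), Real.log k)
        + (((alph x n).card : ℝ) * Real.log β + ∑ t ∈ newTimes x n, Real.log (w t (x t)))
        - ∑ t ∈ Finset.range n, Real.log ((t:ℝ) + β) := by
    unfold Sjoint
    rw [Real.log_prod (fun t _ => (hSpos t).ne'),
      Finset.sum_congr rfl (fun t _ => hlog_t t),
      Finset.sum_sub_distrib, Finset.sum_add_distrib, sum_log_cnt, hrestrict]
    congr 1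
    congr 1
    rw [newTimes, ← Finset.sum_filter, Finset.sum_add_distrib, Finset.sum_const,
      nsmul_eq_mul, ← newTimes, card_newTimes]
  have hCL : CLw x w n = - ∑ t ∈ newTimes x n, Real.log (w t (x t)) := by
    unfold CLw
    simp [one_div, Real.log_inv]
  have h1 : Real.log (((n:ℝ)^n)⁻¹ * ∏ j ∈ alph x n, (cnt x j n : ℝ) ^ cnt x j n)
      = -((n:ℝ) * Real.log n) + ∑ j ∈ alph x n, (cnt x j n : ℝ) * Real.log (cnt x j n) := by
    have hpp : ∀ j ∈ alph x n, (0:ℝ) < (cnt x j n : ℝ) ^ cnt x j n := by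
      intro j hj
      have := hcntpos j hj
      positivity
    rw [Real.log_mul (by positivity) (ne_of_gt (Finset.prod_pos hpp)),
      Real.log_inv, Real.log_pow, Real.log_prod (fun j hj => (hpp j hj).ne')]
    simp only [Real.log_pow]
  have hred : Red x w (fun _ => β) n
      = (∑ j ∈ alph x n, (cnt x j n : ℝ) * Real.log (cnt x j n))
        - (n:ℝ) * Real.log n + CLw x w n - ((alph x n).card : ℝ) * Real.log β
        - (∑ j ∈ alph x n, ∑ k ∈ Finset.range (cnt x j n), Real.log k)
        + ∑ t ∈ Finset.range n, Real.log ((t:ℝ) + β) := by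
    unfold Red
    rw [h1, hlogS, hCL]
    ring
  -- per-symbol bound
  have hT1 : ∑ j ∈ alph x n, ((cnt x j n : ℝ) - 1 + (1/2) * Real.log (cnt x j n))
      ≤ (∑ j ∈ alph x n, (cnt x j n : ℝ) * Real.log (cnt x j n))
        - ∑ j ∈ alph x n, ∑ k ∈ Finset.range (cnt x j n), Real.log k := by
    rw [← Finset.sum_sub_distrib]
    exact Finset.sum_le_sum (fun j hj => per_symbol _ (hcntpos j hj))
  have hsplit : ∑ j ∈ alph x n, ((cnt x j n : ℝ) - 1 + (1/2) * Real.log (cnt x j n))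
      = (n : ℝ) - ((alph x n).card : ℝ) + ∑ j ∈ alph x n, (1/2) * Real.log (cnt x j n) := by
    rw [Finset.sum_add_distrib, Finset.sum_sub_distrib, Finset.sum_const, hsumA]
    simp [nsmul_eq_mul]
  -- lower bound on the denominator sum
  have hT2 : Real.log β + ∑ k ∈ Finset.range n, Real.log k
      ≤ ∑ t ∈ Finset.range n, Real.log ((t:ℝ) + β) := by
    obtain ⟨m, rfl⟩ : ∃ m, n = m + 1 := ⟨n - 1, by omega⟩
    rw [Finset.sum_range_succ' (fun t => Real.log ((t:ℝ) + β)),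
      Finset.sum_range_succ' (fun k => Real.log (k:ℝ))]
    have hterm : ∀ i ∈ Finset.range m,
        Real.log (((i:ℕ) + 1 : ℕ)) ≤ Real.log (((i:ℕ) + 1 : ℕ) + β) := by
      intro i _
      apply Real.log_le_log (by positivity)
      push_cast
      linarith
    have hsum := Finset.sum_le_sum hterm
    push_cast at hsum ⊢
    simp only [Real.log_zero, zero_add, add_zero]
    linarith
  have hT3 := lower_tail n hn
  have hm1 : 1 ≤ (alph x n).card := by
    apply Finset.card_pos.mpr
    exact ⟨x 0, Finset.mem_image.mpr ⟨0, Finset.mem_range.mpr (by omega), rfl⟩⟩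
  have hβlog : Real.log β ≤ 0 := Real.log_nonpos hβ0.le hβ1
  have hmb : ((alph x n).card : ℝ) * Real.log β ≤ Real.log β := by
    have h1' : (1:ℝ) ≤ ((alph x n).card : ℝ) := by exact_mod_cast hm1
    nlinarith
  have hsqrt : Real.log (Real.sqrt (2 * π)) = (1/2) * Real.log 2 + (1/2) * Real.log π := by
    rw [Real.log_sqrt (by positivity), Real.log_mul two_ne_zero Real.pi_ne_zero]
    ring
  have hlog2 : 0 ≤ Real.log 2 := Real.log_nonneg one_le_two
  rw [ge_iff_le]
  linarith [hred, hT1, hsplit, hT2, hT3, hmb, hsqrt, hlog2]
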